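/- Let h be a polynomial in k[p] and define h_(n), h_[n] as in the recursions h_(0)=h_[0]=1, h_(n) = -h·h_(n-1) + h_(n-1)', h_[n] = h·h_[n-1] + h_[n-1]'. Then for any ξ < k, the sum over s from ξ to k-1 of C(k,s)·C(s,ξ)·h_[s-ξ]·h_(k-s) equals -C(k,ξ)·h_[k-ξ]. -/

import Mathlib

/-!
Put `S n = ∑ᵢ C(n,i) h_[i] h_(n-i)`. Expanding `S (n+1)` with Pascal's rule and the two recursions,
the terms `± h h_[i] h_(j)` cancel and what remains is the Leibniz rule: `S (n+1) = (S n)'`.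
Hence `S n` is the `n`-th derivative of `h_[0] h_(0) = 1`, which vanishes for `n ≥ 1`.
The sum in the theorem is `C(K,ξ) (S (K-ξ) - h_[K-ξ])`, because `C(K,s) C(s,ξ) = C(K,ξ) C(K-ξ,s-ξ)`.
-/

open Polynomial Finset

noncomputable section

variable {k : Type*} [Field k] [CharZero k]

/-- The sequence `h_(n)`:  `h_(0) = 1`, `h_(n) = -h·h_(n-1) + h_(n-1)'`. -/
def hpar (h : Polynomial k) : ℕ → Polynomial k
  | 0 => 1
  | n + 1 => -h * hpar h n + derivative (hpar h n)

/-- The sequence `h_[n]`:  `h_[0] = 1`, `h_[n] = h·h_[n-1] + h_[n-1]'`. -/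
def hbr (h : Polynomial k) : ℕ → Polynomial k
  | 0 => 1
  | n + 1 => h * hbr h n + derivative (hbr h n)

section BinomialConvolution

variable {R : Type*} [CommRing R] {h : R[X]} {a b : ℕ → R[X]}

theorem sum_antidiagonal_choose_mul_succ_eq_derivative
    (ha : ∀ n, a (n + 1) = h * a n + derivative (a n))
    (hb : ∀ n, b (n + 1) = -h * b n + derivative (b n)) (n : ℕ) :
    ∑ ij ∈ antidiagonal (n + 1), ((n + 1).choose ij.1 : R[X]) * (a ij.1 * b ij.2) =
      derivative (∑ ij ∈ antidiagonal n, (n.choose ij.1 : R[X]) * (a ij.1 * b ij.2)) := by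
  rw [sum_antidiagonal_choose_succ_mul (fun i j => a i * b j), derivative_sum, ← sum_add_distrib]
  refine sum_congr rfl fun ij hij => ?_
  rw [Nat.choose_symm_of_eq_add (mem_antidiagonal.mp hij).symm, ha, hb, derivative_mul,
    derivative_mul, derivative_natCast]
  ring

theorem sum_antidiagonal_choose_mul_eq_iterate_derivative
    (ha : ∀ n, a (n + 1) = h * a n + derivative (a n))
    (hb : ∀ n, b (n + 1) = -h * b n + derivative (b n)) (n : ℕ) :
    ∑ ij ∈ antidiagonal n, (n.choose ij.1 : R[X]) * (a ij.1 * b ij.2) =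
      derivative^[n] (a 0 * b 0) := by
  induction n with
  | zero => simp
  | succ n ih =>
    rw [sum_antidiagonal_choose_mul_succ_eq_derivative ha hb, ih, Function.iterate_succ_apply']

end BinomialConvolution

omit [CharZero k] in
theorem sum_range_choose_mul_hbr_mul_hpar (h : k[X]) {n : ℕ} (hn : 0 < n) :
    ∑ i ∈ range n, (n.choose i : k[X]) * hbr h i * hpar h (n - i) = -hbr h n := by
  have hS : ∑ ij ∈ antidiagonal n, (n.choose ij.1 : k[X]) * (hbr h ij.1 * hpar h ij.2) = 0 := by
    rw [sum_antidiagonal_choose_mul_eq_iterate_derivative (fun _ => rfl) (fun _ => rfl)]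
    exact (congrArg _ (mul_one 1)).trans (iterate_derivative_one hn)
  rw [Nat.sum_antidiagonal_eq_sum_range_succ (fun i j => (n.choose i : k[X]) * (hbr h i * hpar h j)),
    sum_range_succ, Nat.choose_self, Nat.sub_self] at hS
  simp only [mul_assoc]
  simpa [hpar] using eq_neg_of_add_eq_zero_left hS

theorem sum_hbr_hpar_eq_neg (h : Polynomial k) (K ξ : ℕ) (hlt : ξ < K) :
    ∑ s ∈ Finset.Ico ξ K,
        (((K.choose s * s.choose ξ : ℕ) : Polynomial k) * hbr h (s - ξ) * hpar h (K - s))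
      = -((K.choose ξ : Polynomial k) * hbr h (K - ξ)) := by
  obtain ⟨m, rfl⟩ := Nat.exists_eq_add_of_lt hlt
  have hchoose : ∀ j, (ξ + m + 1).choose (ξ + j) * (ξ + j).choose ξ =
      (ξ + m + 1).choose ξ * (m + 1).choose j := fun j => by
    rw [Nat.choose_mul (Nat.le_add_right ξ j)]; congr 2 <;> omega
  rw [sum_Ico_eq_sum_range, show ξ + m + 1 - ξ = m + 1 by omega, ← mul_neg,
    ← sum_range_choose_mul_hbr_mul_hpar h m.succ_pos, mul_sum]
  refine sum_congr rfl fun j _ => ?_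
  rw [hchoose, show ξ + m + 1 - (ξ + j) = m + 1 - j by omega, Nat.add_sub_cancel_left]
  push_cast
  ring
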